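/- In the greedy packing procedure, the first block of each produced pack has a score that is minimal among all blocks contained in that pack. -/
import Mathlib


/-- The index in `[1, te]` achieving the minimal score (first such index). -/
noncomputable def greedyArgmin (S : ℕ → ℝ) (te : ℕ) : ℕ :=
  ((List.range' 1 te).argmin S).getD 1

lemma greedyArgmin_le (S : ℕ → ℝ) (te : ℕ) : greedyArgmin S te ≤ max 1 te := by
  unfold greedyArgmin
  cases h : (List.range' 1 te).argmin S with
  | none => simp
  | some m =>
    have hm := List.argmin_mem h
    rw [List.mem_range'_1] at hm
    simp [h]
    omega

/-- The greedy packing procedure: given scores `S`, starting from `t_e`, it picks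
`t_min = argmin_{1 ≤ t ≤ t_e} S t`, emits the pack `(t_min, t_e)`, and recurses on
`t_e := t_min − 1`, stopping when the range is empty. -/
noncomputable def greedyPacks (S : ℕ → ℝ) : ℕ → List (ℕ × ℕ)
  | 0 => []
  | te + 1 =>
    (greedyArgmin S (te + 1), te + 1) :: greedyPacks S (greedyArgmin S (te + 1) - 1)
  decreasing_by
    have := greedyArgmin_le S (te + 1)
    omega


/-- In the greedy packing procedure, the first block of each produced pack has a score
that is minimal among all blocks contained in that pack. -/
theorem greedyPacks_first_block_min (n : ℕ) (S : ℕ → ℝ) :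
    ∀ p ∈ greedyPacks S n, ∀ t, p.1 ≤ t → t ≤ p.2 → S p.1 ≤ S t := by
  induction n using Nat.strong_induction_on with
  | _ n ih =>
    match n with
    | 0 => simp [greedyPacks]
    | te + 1 =>
      rw [greedyPacks]
      intro p hp t h1 h2
      rcases List.mem_cons.mp hp with rfl | hp
      · simp only at h1 h2 ⊢
        have : (List.range' 1 (te+1)).argmin S ≠ none := by
          simp [List.argmin_eq_none]
        cases h : (List.range' 1 (te+1)).argmin S with
        | none => exact absurd h this
        | some m =>
          have hm1 : greedyArgmin S (te+1) = m := by simp [greedyArgmin, h]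
          rw [hm1] at h1 ⊢
          have hmem := List.argmin_mem h
          rw [List.mem_range'_1] at hmem
          have ht : t ∈ List.range' 1 (te+1) := by
            rw [List.mem_range'_1]; omega
          exact List.le_of_mem_argmin ht h
      · have := greedyArgmin_le S (te+1)
        exact ih _ (by omega) p hp t h1 h2
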